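/- arXiv:1305.6647 — 3 statements merged into one kernel-verified Lean document; each statement's English description precedes it below -/
import Mathlib

section
/- Let θ_a, θ_b ∈ (−π/2, π/2), z ∈ ℂ with |z| = 1, and let x_k(z) for k ≥ −1 be the half-traces defined by the recursion x_{k+1}(z) = 2·x_k(z)·x_{k-1}(z) − x_{k-2}(z) with initial data x_{-1}(z) = Re(z)·sec θ_b, x₀(z) = Re(z)·sec θ_a, x₁(z) = Re(z²)·sec θ_a·sec θ_b − tan θ_a·tan θ_b. Suppose the sequence (x_k(z))_{k ≥ -1} is bounded. Then sup_k |x_k(z)| ≤ C(z), where C(z) = max{2 + √(8 + I(z)), sec θ_a, sec θ_b} and I(z) = x₁(z)² + x₀(z)² + x_{-1}(z)² − 2·x₁(z)·x₀(z)·x_{-1}(z) − 1 is the Fricke–Vogt invariant. -/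
set_option maxHeartbeats 800000 in
/-- Let `x : ℕ → ℝ` be the sequence of half-traces, indexed so that
`x 0 = x_{−1}(z) = Re(z)·sec θ_b`, `x 1 = x₀(z) = Re(z)·sec θ_a`,
`x 2 = x₁(z) = Re(z²)·sec θ_a·sec θ_b − tan θ_a·tan θ_b`, satisfying the trace-map
recursion `x_{k+1} = 2 x_k x_{k-1} − x_{k-2}`.  If the sequence is bounded, then
`sup_k |x_k| ≤ C(z) = max{2 + √(8 + I(z)), sec θ_a, sec θ_b}`, where
`I(z) = x₁² + x₀² + x_{−1}² − 2 x₁ x₀ x_{−1} − 1` is the Fricke–Vogt invariant. -/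
theorem stmt7 (θa θb : ℝ)
    (hθa : θa ∈ Set.Ioo (-(Real.pi / 2)) (Real.pi / 2))
    (hθb : θb ∈ Set.Ioo (-(Real.pi / 2)) (Real.pi / 2))
    (z : ℂ) (hz : ‖z‖ = 1)
    (x : ℕ → ℝ)
    (h0 : x 0 = z.re * (Real.cos θb)⁻¹)
    (h1 : x 1 = z.re * (Real.cos θa)⁻¹)
    (h2 : x 2 = (z ^ 2).re * ((Real.cos θa)⁻¹ * (Real.cos θb)⁻¹)
            - Real.tan θa * Real.tan θb)
    (hrec : ∀ k, x (k + 3) = 2 * x (k + 2) * x (k + 1) - x k)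
    (hbdd : ∃ M : ℝ, ∀ k, |x k| ≤ M) :
    ∀ k, |x k| ≤
      max (2 + Real.sqrt (8 +
          (x 2 ^ 2 + x 1 ^ 2 + x 0 ^ 2 - 2 * x 2 * x 1 * x 0 - 1)))
        (max (Real.cos θa)⁻¹ (Real.cos θb)⁻¹) := by
  obtain ⟨M, hM⟩ := hbdd
  set I : ℝ := x 2 ^ 2 + x 1 ^ 2 + x 0 ^ 2 - 2 * x 2 * x 1 * x 0 - 1 with hIdef
  set C : ℝ := max (2 + Real.sqrt (8 + I)) (max (Real.cos θa)⁻¹ (Real.cos θb)⁻¹) with hCdef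
  -- invariant is preserved
  have hinv : ∀ k, x (k+2) ^ 2 + x (k+1) ^ 2 + x k ^ 2
      - 2 * x (k+2) * x (k+1) * x k - 1 = I := by
    intro k
    induction k with
    | zero => simpa using hIdef.symm
    | succ n ih =>
      have e3 : n + 1 + 2 = n + 3 := by omega
      have e2 : n + 1 + 1 = n + 2 := by omega
      rw [e3, e2, hrec n]
      linear_combination ih
  have hca : 0 < Real.cos θa := Real.cos_pos_of_mem_Ioo hθa
  have hcb : 0 < Real.cos θb := Real.cos_pos_of_mem_Ioo hθb
  have hre : |z.re| ≤ 1 := by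
    have h := Complex.abs_re_le_norm z
    rwa [hz] at h
  have hx0 : |x 0| ≤ (Real.cos θb)⁻¹ := by
    rw [h0, abs_mul, abs_inv, abs_of_pos hcb]
    calc |z.re| * (Real.cos θb)⁻¹ ≤ 1 * (Real.cos θb)⁻¹ := by
          exact mul_le_mul_of_nonneg_right hre (by positivity)
      _ = (Real.cos θb)⁻¹ := one_mul _
  have hx1 : |x 1| ≤ (Real.cos θa)⁻¹ := by
    rw [h1, abs_mul, abs_inv, abs_of_pos hca]
    calc |z.re| * (Real.cos θa)⁻¹ ≤ 1 * (Real.cos θa)⁻¹ := by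
          exact mul_le_mul_of_nonneg_right hre (by positivity)
      _ = (Real.cos θa)⁻¹ := one_mul _
  have hx0C : |x 0| ≤ C := le_trans hx0 (le_max_of_le_right (le_max_right _ _))
  have hx1C : |x 1| ≤ C := le_trans hx1 (le_max_of_le_right (le_max_left _ _))
  have hC2 : 2 ≤ C := le_max_of_le_left (by linarith [Real.sqrt_nonneg (8 + I)])
  -- supremum
  have hbddA : BddAbove (Set.range fun k => |x k|) := ⟨M, by rintro y ⟨k, rfl⟩; exact hM k⟩
  set S : ℝ := ⨆ k, |x k| with hSdef
  have hle : ∀ k, |x k| ≤ S := fun k => le_ciSup hbddA k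
  -- the key inequality for interior indices
  have key : ∀ k, 0 < |x (k+2)| →
      (I + 1) * |x (k+2)| ≥ |x (k+2)| ^ 3 - 2 * S ^ 2 := by
    intro k ht
    have hA : |x (k+1)| * |x (k+2)| ≤ S := by
      have h := hrec k
      have : 2 * (|x (k+2)| * |x (k+1)|) = |x (k+3) + x k| := by
        rw [show x (k+3) + x k = 2 * x (k+2) * x (k+1) by rw [h]; ring]
        rw [abs_mul, abs_mul, abs_two]
        ring
      have h2S : |x (k+3) + x k| ≤ 2 * S :=
        le_trans (abs_add_le _ _) (by linarith [hle (k+3), hle k])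
      nlinarith [this, h2S]
    have hB : |x (k+3)| * |x (k+2)| ≤ S := by
      have h := hrec (k+1)
      have e4 : k + 1 + 3 = k + 4 := by omega
      have e3 : k + 1 + 2 = k + 3 := by omega
      have e2 : k + 1 + 1 = k + 2 := by omega
      rw [e4, e3, e2] at h
      have : 2 * (|x (k+3)| * |x (k+2)|) = |x (k+4) + x (k+1)| := by
        rw [show x (k+4) + x (k+1) = 2 * x (k+3) * x (k+2) by rw [h]; ring]
        rw [abs_mul, abs_mul, abs_two]
        ring
      have h2S : |x (k+4) + x (k+1)| ≤ 2 * S :=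
        le_trans (abs_add_le _ _) (by linarith [hle (k+4), hle (k+1)])
      nlinarith [this, h2S]
    have hJ := hinv (k+1)
    have e3 : k + 1 + 2 = k + 3 := by omega
    have e2 : k + 1 + 1 = k + 2 := by omega
    rw [e3, e2] at hJ
    -- I + 1 = x(k+3)^2 + x(k+2)^2 + x(k+1)^2 - 2 x(k+3) x(k+2) x(k+1)
    have hsq2 : |x (k+2)| ^ 2 = x (k+2) ^ 2 := sq_abs _
    have hsq1 : x (k+1) ^ 2 ≥ 0 := sq_nonneg _
    have hsq3 : x (k+3) ^ 2 ≥ 0 := sq_nonneg _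
    have hS0 : 0 ≤ S := le_trans (abs_nonneg (x 0)) (hle 0)
    have e1 : |x (k+3) * x (k+2) * x (k+1)| * |x (k+2)|
        = (|x (k+1)| * |x (k+2)|) * (|x (k+3)| * |x (k+2)|) := by
      rw [abs_mul, abs_mul]; ring
    have e2 : (|x (k+1)| * |x (k+2)|) * (|x (k+3)| * |x (k+2)|) ≤ S * S :=
      mul_le_mul hA hB (mul_nonneg (abs_nonneg _) (abs_nonneg _)) hS0
    have hp : x (k+3) * x (k+2) * x (k+1) * |x (k+2)| ≤ S * S := by
      calc x (k+3) * x (k+2) * x (k+1) * |x (k+2)|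
          ≤ |x (k+3) * x (k+2) * x (k+1)| * |x (k+2)| :=
            mul_le_mul_of_nonneg_right (le_abs_self _) (abs_nonneg _)
        _ = (|x (k+1)| * |x (k+2)|) * (|x (k+3)| * |x (k+2)|) := e1
        _ ≤ S * S := e2
    have hJt : (x (k+3) ^ 2 + x (k+2) ^ 2 + x (k+1) ^ 2
        - 2 * x (k+3) * x (k+2) * x (k+1) - 1) * |x (k+2)| = I * |x (k+2)| := by
      rw [hJ]
    have ht3 : x (k+2) ^ 2 * |x (k+2)| = |x (k+2)| ^ 3 := by
      rw [← hsq2]; ring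
    nlinarith [hJt, ht3, hp,
      mul_nonneg (sq_nonneg (x (k+1))) (abs_nonneg (x (k+2))),
      mul_nonneg (sq_nonneg (x (k+3))) (abs_nonneg (x (k+2)))]
  -- main contradiction argument
  by_contra hcon
  push_neg at hcon
  obtain ⟨k0, hk0⟩ := hcon
  have hCS : C < S := lt_of_lt_of_le hk0 (hle k0)
  have hS2 : 2 < S := lt_of_le_of_lt hC2 hCS
  have hsqrt : 8 + I ≤ Real.sqrt (8 + I) ^ 2 := by
    rcases le_or_gt 0 (8 + I) with h | h
    · rw [Real.sq_sqrt h]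
    · rw [Real.sqrt_eq_zero_of_nonpos h.le]; nlinarith
  have hsqrtnn : 0 ≤ Real.sqrt (8 + I) := Real.sqrt_nonneg _
  have hCs : 2 + Real.sqrt (8 + I) ≤ C := le_max_left _ _
  have hkey : (S - 1) ^ 2 > 9 + I := by nlinarith
  set K : ℝ := 3 * S ^ 2 + |I| + 1 with hKdef
  have hK : 0 < K := by positivity
  set ε : ℝ := min (S - C) (7 / K) with hεdef
  have hε : 0 < ε := lt_min (by linarith) (by positivity)
  obtain ⟨m, hm⟩ := exists_lt_of_lt_ciSup (show S - ε < S by linarith)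
  set t : ℝ := |x m| with htdef
  have htS : t ≤ S := hle m
  have hεC : ε ≤ S - C := min_le_left _ _
  have htC : C < t := by linarith
  have hm0 : m ≠ 0 := by rintro rfl; exact absurd htC (not_lt.2 hx0C)
  have hm1 : m ≠ 1 := by rintro rfl; exact absurd htC (not_lt.2 hx1C)
  obtain ⟨k, rfl⟩ : ∃ k, m = k + 2 := ⟨m - 2, by omega⟩
  have ht0 : 0 < t := lt_of_le_of_lt (le_trans (by norm_num : (0:ℝ) ≤ 2) hC2) htC
  have hkeyt := key k ht0
  -- derive the contradiction
  have hIabs : -|I| ≤ I := neg_abs_le I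
  have hst : 0 ≤ S - t := by linarith
  have hb1 : S ^ 2 + S * t + t ^ 2 - 1 - I ≤ K := by nlinarith
  have hεK : ε * K ≤ 7 := by
    have : ε ≤ 7 / K := min_le_right _ _
    calc ε * K ≤ (7 / K) * K := mul_le_mul_of_nonneg_right this hK.le
      _ = 7 := by field_simp
  have h7 : (S - t) * (S ^ 2 + S * t + t ^ 2 - 1 - I) ≤ 7 := by
    calc (S - t) * (S ^ 2 + S * t + t ^ 2 - 1 - I) ≤ (S - t) * K :=
          mul_le_mul_of_nonneg_left hb1 hst
      _ ≤ ε * K := mul_le_mul_of_nonneg_right (by linarith) hK.le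
      _ ≤ 7 := hεK
  have hgS : S ^ 3 - (1 + I) * S > 2 * S ^ 2 + 14 := by
    nlinarith [mul_pos (show (0:ℝ) < S by linarith)
      (show (0:ℝ) < (S - 1) ^ 2 - (9 + I) by linarith)]
  have hgt : t ^ 3 - (1 + I) * t > 2 * S ^ 2 := by nlinarith
  linarith [hkeyt, hgt]
end

section
/- Fix β₀, β₁, …, β_N ∈ ℂ with |β_i| > 1 for every i, and for h ∈ ℂ \ {0} define M̃_i(h) = [[h, √h / conj(β_i)], [√h / β_i, 1]] and Z̃^{(N)}(h) = Tr( M̃_N(h) · M̃_{N-1}(h) ⋯ M̃_0(h) ). Let α_i = 1/β_i (so |α_i| < 1) and let T_{N+1}(h) = ∏_{j=N}^{0} (1 − |α_j|²)^{-1/2} · [[h, −conj(α_j)], [−α_j h, 1]] be the (N+1)-step CMV transfer matrix with Verblunsky coefficients (α_i). Then h is a zero of Z̃^{(N)} if and only if h is a zero of Tr(T_{N+1}(h)). -/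
open scoped ComplexConjugate

/-- The Szegő transfer matrix `T(z, α) = (1 − |α|²)^{-1/2} · [[z, −conj α], [−α z, 1]]`. -/
noncomputable def szego (z α : ℂ) : Matrix (Fin 2) (Fin 2) ℂ :=
  ((Real.sqrt (1 - ‖α‖ ^ 2) : ℂ))⁻¹ • !![z, -conj α; -α * z, 1]

/-- The product `f N * f (N-1) * ⋯ * f 0` of a finite family of 2×2 matrices
(index `N` leftmost). -/
noncomputable def prodRev {N : ℕ} (f : Fin (N + 1) → Matrix (Fin 2) (Fin 2) ℂ) :
    Matrix (Fin 2) (Fin 2) ℂ :=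
  ((List.ofFn f).reverse).prod

/-!
Conjugating by `diag(1, -√h)` turns `M̃ᵢ(h)` into the unnormalised Szegő matrix
`[[h, -conj αᵢ], [-αᵢ h, 1]]`, and `T_{N+1}(h)` is that product times the nonzero scalar
`∏ (1 - |αᵢ|²)^{-1/2}`. Traces are invariant under conjugation, so the two traces vanish together.
-/

lemma prodRev_one (f : Fin 1 → Matrix (Fin 2) (Fin 2) ℂ) : prodRev f = f 0 := by
  simp [prodRev, List.ofFn_succ]

lemma prodRev_succ {N : ℕ} (f : Fin (N + 2) → Matrix (Fin 2) (Fin 2) ℂ) :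
    prodRev f = prodRev (fun i => f i.succ) * f 0 := by
  simp [prodRev, List.ofFn_succ, Matrix.mul_assoc]

lemma prodRev_smul {N : ℕ} (c : Fin (N + 1) → ℂ) (A : Fin (N + 1) → Matrix (Fin 2) (Fin 2) ℂ) :
    prodRev (fun i => c i • A i) = (∏ i, c i) • prodRev A := by
  induction N with
  | zero => simp [prodRev_one]
  | succ n ih =>
    rw [prodRev_succ, prodRev_succ A, ih (fun i => c i.succ) (fun i => A i.succ),
      smul_mul_assoc, mul_smul_comm, smul_smul, Fin.prod_univ_succ c, mul_comm]

lemma prodRev_conj {N : ℕ} {P Q : Matrix (Fin 2) (Fin 2) ℂ} (hQP : Q * P = 1)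
    (A : Fin (N + 1) → Matrix (Fin 2) (Fin 2) ℂ) :
    prodRev (fun i => P * A i * Q) = P * prodRev A * Q := by
  induction N with
  | zero => simp [prodRev_one]
  | succ n ih =>
    rw [prodRev_succ, prodRev_succ A, ih (fun i => A i.succ)]
    simp only [Matrix.mul_assoc]
    rw [← Matrix.mul_assoc Q P, hQP, Matrix.one_mul]

lemma trace_prodRev_conj {N : ℕ} {P Q : Matrix (Fin 2) (Fin 2) ℂ} (hQP : Q * P = 1)
    (A : Fin (N + 1) → Matrix (Fin 2) (Fin 2) ℂ) :
    (prodRev fun i => P * A i * Q).trace = (prodRev A).trace := by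
  rw [prodRev_conj hQP, Matrix.trace_mul_cycle, hQP, Matrix.one_mul]

lemma diag_mul_diag_inv {s : ℂ} (hs : s ≠ 0) :
    !![1, 0; 0, -s⁻¹] * !![1, 0; 0, -s] = (1 : Matrix (Fin 2) (Fin 2) ℂ) := by
  rw [Matrix.mul_fin_two, Matrix.one_fin_two]
  simp [inv_mul_cancel₀ hs]

lemma diag_conj_eq_szego_matrix {h s : ℂ} (hs : s ^ 2 = h) (hs0 : s ≠ 0) (b : ℂ) :
    !![1, 0; 0, -s] * !![h, s / conj b; s / b, 1] * !![1, 0; 0, -s⁻¹] =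
      !![h, -conj b⁻¹; -b⁻¹ * h, 1] := by
  subst hs
  ext i j
  fin_cases i <;> fin_cases j <;> simp [Matrix.mul_apply, hs0, field]

lemma trace_prodRev_szego {N : ℕ} (z : ℂ) (α : Fin (N + 1) → ℂ) :
    (prodRev fun i => szego z (α i)).trace =
      (∏ i, ((Real.sqrt (1 - ‖α i‖ ^ 2) : ℂ))⁻¹) *
        (prodRev fun i => !![z, -conj (α i); -α i * z, 1]).trace := by
  rw [← smul_eq_mul, ← Matrix.trace_smul, ← prodRev_smul]
  rfl

lemma szego_scale_ne_zero {α : ℂ} (hα : ‖α‖ < 1) :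
    ((Real.sqrt (1 - ‖α‖ ^ 2) : ℂ))⁻¹ ≠ 0 := by
  have hpos : 0 < 1 - ‖α‖ ^ 2 := by nlinarith [norm_nonneg α]
  exact inv_ne_zero (Complex.ofReal_ne_zero.mpr (Real.sqrt_pos.mpr hpos).ne')

/-- For `β₀, …, β_N` of modulus `> 1`, `h ≠ 0` and a fixed branch `s` of `√h`
(`s² = h`), the trace of `M̃_N(h)⋯M̃_0(h)` with `M̃ᵢ(h) = [[h, √h/conj βᵢ], [√h/βᵢ, 1]]`
vanishes exactly when the trace of the `(N+1)`-step CMV transfer matrix `T_{N+1}(h)` with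
Verblunsky coefficients `αᵢ = 1/βᵢ` vanishes. -/
theorem stmt8 (N : ℕ) (β : Fin (N + 1) → ℂ) (hβ : ∀ i, 1 < ‖β i‖)
    (h : ℂ) (hh : h ≠ 0) (s : ℂ) (hs : s ^ 2 = h) :
    Matrix.trace (prodRev fun i => !![h, s / conj (β i); s / β i, 1]) = 0 ↔
    Matrix.trace (prodRev fun i => szego h ((β i)⁻¹)) = 0 := by
  have hs0 : s ≠ 0 := by
    rintro rfl
    exact hh (by simpa using hs.symm)
  have hscale : (∏ i, ((Real.sqrt (1 - ‖(β i)⁻¹‖ ^ 2) : ℂ))⁻¹) ≠ 0 :=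
    Finset.prod_ne_zero_iff.2 fun i _ =>
      szego_scale_ne_zero (by rw [norm_inv]; exact inv_lt_one_of_one_lt₀ (hβ i))
  rw [← trace_prodRev_conj (diag_mul_diag_inv hs0),
    funext fun i => diag_conj_eq_szego_matrix hs hs0 (β i), trace_prodRev_szego,
    mul_eq_zero, or_iff_right hscale]
end

section
/- Let u be the unique one-sided infinite word over {a, b} fixed by the Fibonacci substitution S(a) = ab, S(b) = a, let W_k = S^{k-1}(a) (so |W_k| = F_k with F₁ = 1, F₂ = 2, F_{k+1} = F_k + F_{k-1}). Call a finite subword w of u repeatable if the bi-infinite periodic sequence with unit cell w is a shift of the bi-infinite periodic sequence with unit cell u₀u₁⋯u_{|w|−1}. Then for every k ≥ 2, the word W_k W_k (concatenation) contains exactly F_k distinct subwords of length F_k, and all of them are repeatable. -/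
/-- The Fibonacci substitution words `S^k(a)` over the alphabet `{a, b}`, with `a = true`,
`b = false`: `S^0(a) = a`, `S^1(a) = ab`, `S^{k+2}(a) = S^{k+1}(a) S^k(a)`.
Thus `fibWord (k-1)` is the word `W_k = S^{k-1}(a)`, of length `F_k`. -/
def fibWord : ℕ → List Bool
  | 0 => [true]
  | 1 => [true, false]
  | (k + 2) => fibWord (k + 1) ++ fibWord k

/-- The one-sided infinite fixed point `u = abaababaabaab…` of the Fibonacci substitution;
`fibWord (n + 2)` has length `> n` and all the words `fibWord k` are nested prefixes, so
this gives the `n`-th letter of `u`. -/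
def uSeq (n : ℕ) : Bool := (fibWord (n + 2)).getD n true

/-- `w` is a (finite) subword of `u`, i.e. a block of consecutive letters of `u`. -/
def subwordOfU (w : List Bool) : Prop :=
  ∃ i : ℕ, w = (List.range w.length).map fun j => uSeq (i + j)

/-- The bi-infinite periodic sequence with unit cell `w`. -/
def periodize (w : List Bool) (n : ℤ) : Bool :=
  w.getD (n % (w.length : ℤ)).toNat true

/-- `w` is repeatable: the bi-infinite periodic sequence with unit cell `w` is a shift of
the bi-infinite periodic sequence with unit cell `u₀u₁⋯u_{|w|−1}`. -/
def Repeatable (w : List Bool) : Prop :=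
  ∃ s : ℤ, ∀ n : ℤ,
    periodize w n = periodize ((List.range w.length).map uSeq) (n + s)

/-!
The words of length `|W|` occurring in `W W` are exactly the rotations of `W`, and the periodic
sequence with unit cell `W.rotate i` is the one with unit cell `W` shifted by `i`. For `W = W_k`,
which is also the prefix of `u` of length `F_k`, all of them are therefore repeatable. They are
pairwise distinct because `W_k` is primitive: a nontrivial rotation fixing `W` writes
`W = x y = y x`, so `W = z^m` with `m ≥ 2`, and `m` would divide both letter counts of `W_k`,
which are consecutive Fibonacci numbers.
-/

namespace List

variable {α : Type*}

theorem getElem?_append_self (l : List α) {m : ℕ} (hm : m < 2 * l.length) :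
    (l ++ l)[m]? = l[m % l.length]? := by
  rcases lt_or_ge m l.length with h | h
  · rw [getElem?_append_left h, Nat.mod_eq_of_lt h]
  · rw [getElem?_append_right h, Nat.mod_eq_sub_mod h, Nat.mod_eq_of_lt (by omega)]

theorem infix_append_self_iff_isRotated {l v : List α} (hv : v.length = l.length) :
    v <:+: l ++ l ↔ l ~r v := by
  rw [infix_iff_getElem?, isRotated_iff_mod, length_append]
  constructor
  · rintro ⟨k, hk, hget⟩
    refine ⟨k, by omega, ext_getElem (by simp [hv]) fun i hi hi' => ?_⟩
    have hl : 0 < l.length := by omega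
    have hvi := hget i hi'
    rw [getElem?_append_self l (by omega), getElem?_eq_getElem (Nat.mod_lt _ hl)] at hvi
    rw [getElem_rotate]
    exact Option.some_injective _ hvi
  · rintro ⟨k, hk, rfl⟩
    refine ⟨k, by omega, fun i hi => ?_⟩
    rw [length_rotate] at hi
    rw [getElem?_append_self l (by omega), getElem_rotate, getElem?_eq_getElem]

theorem setOf_infix_append_self_eq_image_rotate {l : List α} (hl : l ≠ []) :
    {v | v.length = l.length ∧ v <:+: l ++ l} = l.rotate '' Set.Iio l.length := by
  ext v
  constructor
  · rintro ⟨hv, hinf⟩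
    obtain ⟨k, hk, rfl⟩ := isRotated_iff_mod.1 ((infix_append_self_iff_isRotated hv).1 hinf)
    rcases hk.lt_or_eq with hk | rfl
    · exact ⟨k, hk, rfl⟩
    · exact ⟨0, length_pos_iff.2 hl, by rw [rotate_zero, rotate_length]⟩
  · rintro ⟨k, -, rfl⟩
    exact ⟨length_rotate l k,
      (infix_append_self_iff_isRotated (length_rotate l k)).2 (IsRotated.forall l k).symm⟩

theorem exists_eq_flatten_replicate_of_append_comm {x y : List α} (h : x ++ y = y ++ x) :
    ∃ z : List α, ∃ p q : ℕ, x = (replicate p z).flatten ∧ y = (replicate q z).flatten := by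
  induction hn : x.length + y.length using Nat.strong_induction_on generalizing x y with
  | _ n ih =>
  rcases eq_or_ne x [] with rfl | hx
  · exact ⟨y, 0, 1, by simp⟩
  rcases eq_or_ne y [] with rfl | hy
  · exact ⟨x, 1, 0, by simp⟩
  rcases append_eq_append_iff.1 h with ⟨t, rfl, ht⟩ | ⟨t, rfl, ht⟩
  · obtain ⟨z, p, q, rfl, rfl⟩ := ih _ (by simp [← hn, length_pos_iff.2 hx]) ht rfl
    exact ⟨z, p, p + q, rfl, by rw [replicate_add, flatten_append]⟩
  · obtain ⟨z, p, q, rfl, rfl⟩ := ih _ (by simp [← hn, length_pos_iff.2 hy]) ht.symm rfl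
    exact ⟨z, q + p, q, by rw [replicate_add, flatten_append], rfl⟩

theorem count_flatten_replicate [BEq α] (a : α) (m : ℕ) (z : List α) :
    (replicate m z).flatten.count a = m * z.count a := by
  simp [count_flatten]

theorem rotate_ne_self_of_coprime_count [BEq α] {l : List α} {a b : α}
    (hab : Nat.Coprime (l.count a) (l.count b)) {d : ℕ} (hd : 0 < d) (hdl : d < l.length) :
    l.rotate d ≠ l := by
  intro hrot
  have hcomm : l.take d ++ l.drop d = l.drop d ++ l.take d := by
    rw [take_append_drop, ← rotate_eq_drop_append_take hdl.le, hrot]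
  obtain ⟨z, p, q, hp, hq⟩ := exists_eq_flatten_replicate_of_append_comm hcomm
  have hp0 : p ≠ 0 := by
    rintro rfl
    have := congrArg length (take_append_drop d l)
    simp only [hp, replicate_zero, flatten_nil, nil_append, length_drop] at this
    omega
  have hq0 : q ≠ 0 := by
    rintro rfl
    rw [replicate_zero, flatten_nil, drop_eq_nil_iff] at hq
    omega
  have hl : l = (replicate (p + q) z).flatten := by
    rw [replicate_add, flatten_append, ← hp, ← hq, take_append_drop]
  have hdvd : p + q ∣ 1 := by
    rw [← hab.gcd_eq_one, hl, count_flatten_replicate, count_flatten_replicate]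
    exact Nat.dvd_gcd (dvd_mul_right _ _) (dvd_mul_right _ _)
  have := Nat.le_of_dvd one_pos hdvd
  omega

theorem injOn_rotate_of_rotate_ne_self {l : List α}
    (h : ∀ d, 0 < d → d < l.length → l.rotate d ≠ l) :
    Set.InjOn l.rotate (Set.Iio l.length) := by
  suffices ∀ i j, i < j → j < l.length → l.rotate i ≠ l.rotate j by
    intro i hi j hj hij
    by_contra hne
    rcases lt_or_gt_of_ne hne with hlt | hlt
    exacts [this i j hlt hj hij, this j i hlt hi hij.symm]
  intro i j hij hj heq
  apply h (i + (l.length - j)) (by omega) (by omega)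
  rw [← rotate_rotate, heq, rotate_rotate, Nat.add_sub_cancel' hj.le, rotate_length]

end List

theorem periodize_rotate {l : List Bool} (hl : l ≠ []) (i : ℕ) (n : ℤ) :
    periodize (l.rotate i) n = periodize l (n + i) := by
  have hF : (0 : ℤ) < l.length := by exact_mod_cast List.length_pos_iff.2 hl
  have hn : 0 ≤ n % l.length := Int.emod_nonneg n hF.ne'
  have hlt : (n % l.length).toNat < l.length := by have := Int.emod_lt_of_pos n hF; omega
  have hmod : ((n % l.length).toNat + i) % l.length = ((n + i) % l.length).toNat := by
    zify [Int.emod_nonneg (n + i) hF.ne']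
    rw [Int.toNat_of_nonneg hn, Int.emod_add_emod,
      Int.toNat_of_nonneg (Int.emod_nonneg (n + i) hF.ne')]
  unfold periodize
  rw [List.length_rotate, List.getD_eq_getElem?_getD, List.getElem?_rotate hlt, hmod,
    List.getD_eq_getElem?_getD]

theorem count_true_fibWord : ∀ n, (fibWord n).count true = Nat.fib (n + 1)
  | 0 => rfl
  | 1 => rfl
  | n + 2 => by
    rw [fibWord, List.count_append, count_true_fibWord (n + 1), count_true_fibWord n,
      Nat.fib_add_two (n := n + 1), add_comm]

theorem count_false_fibWord : ∀ n, (fibWord n).count false = Nat.fib n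
  | 0 => rfl
  | 1 => rfl
  | n + 2 => by
    rw [fibWord, List.count_append, count_false_fibWord (n + 1), count_false_fibWord n,
      Nat.fib_add_two, add_comm]

theorem lt_length_fibWord : ∀ n, n < (fibWord n).length
  | 0 => by simp [fibWord]
  | 1 => by simp [fibWord]
  | n + 2 => by
    have := lt_length_fibWord (n + 1)
    have := lt_length_fibWord n
    rw [fibWord, List.length_append]
    omega

theorem fibWord_ne_nil (n : ℕ) : fibWord n ≠ [] :=
  List.ne_nil_of_length_pos (Nat.zero_lt_of_lt (lt_length_fibWord n))

theorem coprime_count_fibWord (n : ℕ) :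
    Nat.Coprime ((fibWord n).count false) ((fibWord n).count true) := by
  rw [count_false_fibWord, count_true_fibWord]
  exact Nat.fib_coprime_fib_succ n

theorem fibWord_prefix_fibWord {m n : ℕ} (h : m ≤ n) : fibWord m <+: fibWord n := by
  induction n, h using Nat.le_induction with
  | base => exact List.prefix_refl _
  | succ n _ ih =>
    refine ih.trans ?_
    cases n with
    | zero => exact ⟨[false], rfl⟩
    | succ n => exact ⟨fibWord n, rfl⟩

theorem map_uSeq_range_length_fibWord (n : ℕ) :
    (List.range (fibWord n).length).map uSeq = fibWord n := by
  refine List.ext_getElem (by simp) fun j _ hj => ?_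
  have hj' : j < (fibWord (j + 2)).length := by have := lt_length_fibWord (j + 2); omega
  rw [List.getElem_map, List.getElem_range, uSeq, List.getD_eq_getElem _ _ hj']
  rcases le_total n (j + 2) with h | h
  · exact ((fibWord_prefix_fibWord h).getElem hj).symm
  · exact (fibWord_prefix_fibWord h).getElem hj'

theorem repeatable_rotate_fibWord (n i : ℕ) : Repeatable ((fibWord n).rotate i) :=
  ⟨i, fun m => by
    rw [List.length_rotate, map_uSeq_range_length_fibWord, periodize_rotate (fibWord_ne_nil n)]⟩

theorem stmt10_general (k : ℕ) :
    Set.ncard {v : List Bool |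
        v.length = (fibWord (k - 1)).length ∧ v <:+: (fibWord (k - 1) ++ fibWord (k - 1))}
      = (fibWord (k - 1)).length ∧
    ∀ v : List Bool, v.length = (fibWord (k - 1)).length →
      v <:+: (fibWord (k - 1) ++ fibWord (k - 1)) → Repeatable v := by
  have hset := List.setOf_infix_append_self_eq_image_rotate (fibWord_ne_nil (k - 1))
  refine ⟨?_, fun v hlen hinf => ?_⟩
  · have hinj := List.injOn_rotate_of_rotate_ne_self fun _ =>
      List.rotate_ne_self_of_coprime_count (coprime_count_fibWord (k - 1))
    rw [hset, hinj.ncard_image, Set.ncard_Iio_nat]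
  · obtain ⟨i, -, rfl⟩ := hset.subset ⟨hlen, hinf⟩
    exact repeatable_rotate_fibWord (k - 1) i

/-- For every `k ≥ 2`, the word `W_k W_k` (where `W_k = S^{k-1}(a)` has length
`F_k`) contains exactly `F_k` distinct subwords of length `F_k`, and all of them are
repeatable. -/
theorem stmt10 (k : ℕ) (hk : 2 ≤ k) :
    Set.ncard {v : List Bool |
        v.length = (fibWord (k - 1)).length ∧ v <:+: (fibWord (k - 1) ++ fibWord (k - 1))}
      = (fibWord (k - 1)).length ∧
    ∀ v : List Bool, v.length = (fibWord (k - 1)).length →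
      v <:+: (fibWord (k - 1) ++ fibWord (k - 1)) → Repeatable v :=
  stmt10_general k
end
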